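/- arXiv:1609.04559 — 3 statements merged into one kernel-verified Lean document; each statement's English description precedes it below -/
import Mathlib

section
/- Let λ > 0 and c > 0. The function p(x,t) = (1/(2c cosh(λt))) · ∂/∂t I₀( (λ/c)√(c²t² − x²) ) satisfies the non-homogeneous telegraph equation ∂²p/∂t² + 2λ tanh(λt) ∂p/∂t = c² ∂²p/∂x² for all (x,t) with t > 0 and |x| < ct. -/
open Real MeasureTheory

/-- Modified Bessel function of order zero, `I₀(z) = ∑ₖ (z/2)^{2k} / (k!)²`. -/
noncomputable def besselI0 (z : ℝ) : ℝ := ∑' k : ℕ, (z/2)^(2*k) / ((k.factorial : ℝ))^2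

open Filter Topology

/-!
Write `u = c²t² - x²`. On `u ≥ 0`, `I₀((λ/c)√u) = F(u)` for the entire power series
`F(u) = ∑ b^{2k} uᵏ / (k!)²`, `b = λ/(2c)`, whose coefficients `aₖ` satisfy
`(k+1)² aₖ₊₁ = b² aₖ`. Hence `p = c t G(u) / cosh(λt)` with `G = F'`, and the recursion gives
`u G'' + 2 G' = b² G`. The substitution `p = q / cosh(λt)` turns the telegraph equation into the
Klein–Gordon equation `q_tt - c² q_xx = λ² q` (because `cosh'' = λ² cosh`), and for
`q = c t G(c²t² - x²)` the left side is `4c³t (u G'' + 2 G')`, which is `4c²b² q = λ² q` by the ODE.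
-/

noncomputable def powerSum (a : ℕ → ℝ) (u : ℝ) : ℝ := ∑' k, a k * u ^ k

def derivCoeff (a : ℕ → ℝ) (k : ℕ) : ℝ := (k + 1) * a (k + 1)

def EntireCoeffs (a : ℕ → ℝ) : Prop := ∀ u : ℝ, Summable fun k => a k * u ^ k

namespace EntireCoeffs

variable {a : ℕ → ℝ}

lemma summable_abs_mul_pow (ha : EntireCoeffs a) (r : ℝ) :
    Summable fun k => |a k| * |r| ^ k :=
  (summable_abs_iff.mpr (ha r)).congr fun k => by rw [abs_mul, abs_pow]

lemma hasSum (ha : EntireCoeffs a) (u : ℝ) : HasSum (fun k => a k * u ^ k) (powerSum a u) :=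
  (ha u).hasSum

lemma deriv (ha : EntireCoeffs a) : EntireCoeffs (derivCoeff a) := by
  intro u
  set R := |u| + 1
  have hR : 1 ≤ R := by simp [R]
  refine Summable.of_norm_bounded
    ((summable_nat_add_iff 1).mpr (ha.summable_abs_mul_pow (2 * R))) fun k => ?_
  have hk : ((k : ℝ) + 1) * |u| ^ k ≤ 2 ^ (k + 1) * R ^ (k + 1) := by
    gcongr
    · exact_mod_cast (Nat.lt_two_pow_self (n := k + 1)).le
    · calc |u| ^ k ≤ R ^ k := pow_le_pow_left₀ (abs_nonneg u) (by simp [R]) k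
        _ ≤ R ^ (k + 1) := pow_le_pow_right₀ hR k.le_succ
  have hk1 : |(k : ℝ) + 1| = k + 1 := abs_of_pos (by positivity)
  have h2R : |2 * R| = 2 * R := abs_of_pos (by positivity)
  rw [Real.norm_eq_abs, derivCoeff, abs_mul, abs_mul, abs_pow, hk1, h2R, mul_pow]
  calc ((k : ℝ) + 1) * |a (k + 1)| * |u| ^ k
      = |a (k + 1)| * (((k : ℝ) + 1) * |u| ^ k) := by ring
    _ ≤ |a (k + 1)| * (2 ^ (k + 1) * R ^ (k + 1)) := by gcongr

lemma hasDerivAt (ha : EntireCoeffs a) (u : ℝ) :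
    HasDerivAt (powerSum a) (powerSum (derivCoeff a) u) u := by
  set R := |u| + 1
  have hR : 1 ≤ R := by simp [R]
  have hbound : Summable fun n : ℕ => n * |a n| * R ^ (n - 1) := by
    refine (summable_nat_add_iff 1).mp ((ha.deriv.summable_abs_mul_pow R).congr fun k => ?_)
    have hk1 : |(k : ℝ) + 1| = k + 1 := abs_of_pos (by positivity)
    rw [derivCoeff, abs_mul, hk1, abs_of_pos (by positivity : 0 < R)]
    push_cast
    simp
  have hderiv := hasDerivAt_tsum_of_isPreconnected hbound Metric.isOpen_ball
    (convex_ball (0 : ℝ) R).isPreconnected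
    (fun n y _ => (hasDerivAt_pow n y).const_mul (a n)) (fun n y hy => ?_)
    (Metric.mem_ball_self (by positivity)) (ha 0) (y := u) (by simp [R])
  · have hsum : HasSum (fun n => a n * (n * u ^ (n - 1))) (powerSum (derivCoeff a) u) := by
      refine (hasSum_nat_add_iff' 1).mp ?_
      simpa [derivCoeff, mul_left_comm, mul_assoc] using ha.deriv.hasSum u
    rwa [hsum.tsum_eq] at hderiv
  · have hy : |y| ≤ R := by simpa using (Metric.mem_ball.mp hy).le
    rw [Real.norm_eq_abs, abs_mul, abs_mul, abs_pow, Nat.abs_cast]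
    calc |a n| * (n * |y| ^ (n - 1)) ≤ |a n| * (n * R ^ (n - 1)) := by gcongr
      _ = n * |a n| * R ^ (n - 1) := by ring

lemma ode_of_coeff_rec (ha : EntireCoeffs a) {m β : ℝ}
    (hrec : ∀ k : ℕ, ((k : ℝ) + 1) * (k + m + 1) * a (k + 1) = β * a k) (u : ℝ) :
    u * powerSum (derivCoeff (derivCoeff a)) u
      + (m + 1) * powerSum (derivCoeff a) u = β * powerSum a u := by
  have hshift : HasSum (fun j : ℕ => j * derivCoeff a j * u ^ j)
      (u * powerSum (derivCoeff (derivCoeff a)) u) := by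
    refine (hasSum_nat_add_iff' 1).mp ?_
    simpa [derivCoeff, pow_succ, mul_comm, mul_left_comm, mul_assoc]
      using (ha.deriv.deriv.hasSum u).mul_left u
  have hterm : ∀ j : ℕ,
      j * derivCoeff a j * u ^ j + (m + 1) * (derivCoeff a j * u ^ j) = β * (a j * u ^ j) := by
    intro j
    rw [derivCoeff, ← mul_assoc β, ← hrec]
    ring
  refine (hshift.add ((ha.deriv.hasSum u).mul_left (m + 1))).unique ?_
  simpa only [hterm] using (ha.hasSum u).mul_left β

end EntireCoeffs

noncomputable def besselCoeff (b : ℝ) (k : ℕ) : ℝ := b ^ (2 * k) / (k.factorial : ℝ) ^ 2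

lemma entireCoeffs_besselCoeff (b : ℝ) : EntireCoeffs (besselCoeff b) := by
  intro u
  refine Summable.of_norm_bounded (Real.summable_pow_div_factorial (b ^ 2 * |u|)) fun k => ?_
  have hfac : (k.factorial : ℝ) ≤ (k.factorial : ℝ) ^ 2 := by
    have : (1 : ℝ) ≤ k.factorial := by exact_mod_cast k.factorial_pos
    nlinarith
  rw [Real.norm_eq_abs, besselCoeff, abs_mul, abs_div, abs_pow, abs_pow, abs_pow, Nat.abs_cast,
    pow_mul, sq_abs, mul_pow, div_mul_eq_mul_div]
  gcongr

lemma besselCoeff_succ (b : ℝ) (k : ℕ) :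
    ((k : ℝ) + 1) ^ 2 * besselCoeff b (k + 1) = b ^ 2 * besselCoeff b k := by
  rw [besselCoeff, besselCoeff, Nat.factorial_succ, show 2 * (k + 1) = 2 + 2 * k by ring, pow_add]
  push_cast
  field_simp

lemma derivCoeff_besselCoeff_succ (b : ℝ) (k : ℕ) :
    ((k : ℝ) + 1) * (k + 1 + 1) * derivCoeff (besselCoeff b) (k + 1)
      = b ^ 2 * derivCoeff (besselCoeff b) k := by
  have h := besselCoeff_succ b (k + 1)
  push_cast at h
  rw [derivCoeff, derivCoeff]
  push_cast
  linear_combination ((k : ℝ) + 1) * h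

lemma besselI0_mul_sqrt (a : ℝ) {u : ℝ} (hu : 0 ≤ u) :
    besselI0 (a * √u) = powerSum (besselCoeff (a / 2)) u := by
  refine tsum_congr fun k => ?_
  rw [besselCoeff, show a * √u / 2 = a / 2 * √u by ring, mul_pow, pow_mul √u, Real.sq_sqrt hu]
  ring

lemma hasDerivAt_besselI0_mul_sqrt (a c y : ℝ) {s : ℝ} (hs : 0 < c ^ 2 * s ^ 2 - y ^ 2) :
    HasDerivAt (fun τ => besselI0 (a * √(c ^ 2 * τ ^ 2 - y ^ 2)))
      (powerSum (derivCoeff (besselCoeff (a / 2))) (c ^ 2 * s ^ 2 - y ^ 2) * (2 * c ^ 2 * s))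
      s := by
  have hinner : HasDerivAt (fun τ : ℝ => c ^ 2 * τ ^ 2 - y ^ 2) (2 * c ^ 2 * s) s := by
    simpa [mul_comm, mul_left_comm, mul_assoc] using
      ((hasDerivAt_pow 2 s).const_mul (c ^ 2)).sub_const (y ^ 2)
  have hpos : ∀ᶠ τ in 𝓝 s, 0 < c ^ 2 * τ ^ 2 - y ^ 2 :=
    (by fun_prop : Continuous fun τ : ℝ => c ^ 2 * τ ^ 2 - y ^ 2).continuousAt.eventually
      (lt_mem_nhds hs)
  refine (((entireCoeffs_besselCoeff _).hasDerivAt _).comp s hinner).congr_of_eventuallyEq ?_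
  filter_upwards [hpos] with τ hτ using besselI0_mul_sqrt a hτ.le

lemma iteratedDeriv_two_eq_of_hasDerivAt {f f' : ℝ → ℝ} {f'' x : ℝ}
    (hf : ∀ y, HasDerivAt f (f' y) y) (hf' : HasDerivAt f' f'' x) :
    iteratedDeriv 2 f x = f'' := by
  rw [iteratedDeriv_succ, iteratedDeriv_one, funext fun y => (hf y).deriv]
  exact hf'.deriv

lemma telegraph_div_cosh (lam : ℝ) {q q' : ℝ → ℝ} {t : ℝ}
    (hq : ∀ s, HasDerivAt q (q' s) s) (hq' : DifferentiableAt ℝ q' t) :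
    iteratedDeriv 2 (fun s => q s / cosh (lam * s)) t
      + 2 * lam * tanh (lam * t) * deriv (fun s => q s / cosh (lam * s)) t
      = (iteratedDeriv 2 q t - lam ^ 2 * q t) / cosh (lam * t) := by
  have hcosh : ∀ s, HasDerivAt (fun s => cosh (lam * s)) (sinh (lam * s) * lam) s := fun s => by
    simpa using ((hasDerivAt_id s).const_mul lam).cosh
  have hsinh : HasDerivAt (fun s => sinh (lam * s)) (cosh (lam * t) * lam) t := by
    simpa using ((hasDerivAt_id t).const_mul lam).sinh
  have hP : ∀ s, HasDerivAt (fun s => q s / cosh (lam * s))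
      ((q' s * cosh (lam * s) - q s * (sinh (lam * s) * lam)) / cosh (lam * s) ^ 2) s :=
    fun s => (hq s).div (hcosh s) (cosh_pos _).ne'
  have hP' := ((hq'.hasDerivAt.mul (hcosh t)).sub ((hq t).mul (hsinh.mul_const lam))).div
    ((hcosh t).pow 2) (pow_pos (cosh_pos (lam * t)) 2).ne'
  rw [iteratedDeriv_two_eq_of_hasDerivAt hP hP', (hP t).deriv,
    iteratedDeriv_two_eq_of_hasDerivAt hq hq'.hasDerivAt, tanh_eq_sinh_div_cosh]
  have hcosh_ne := (cosh_pos (lam * t)).ne'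
  simp only [Pi.mul_apply, Pi.sub_apply, Pi.pow_apply, Nat.cast_ofNat]
  field_simp
  ring

section RadialProfile

variable {G G' G'' : ℝ → ℝ} (c : ℝ)

lemma hasDerivAt_radial_time (hG : ∀ u, HasDerivAt G (G' u) u) (x s : ℝ) :
    HasDerivAt (fun s => c * s * G (c ^ 2 * s ^ 2 - x ^ 2))
      (c * G (c ^ 2 * s ^ 2 - x ^ 2) + 2 * c ^ 3 * s ^ 2 * G' (c ^ 2 * s ^ 2 - x ^ 2)) s := by
  have hu : HasDerivAt (fun s : ℝ => c ^ 2 * s ^ 2 - x ^ 2) (c ^ 2 * (2 * s)) s := by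
    simpa using ((hasDerivAt_pow 2 s).const_mul (c ^ 2)).sub_const (x ^ 2)
  refine (((hasDerivAt_id s).const_mul c).mul ((hG _).comp s hu)).congr_deriv ?_
  simp only [Function.comp_apply, id]
  ring

lemma hasDerivAt_radial_time_deriv (hG : ∀ u, HasDerivAt G (G' u) u)
    (hG' : ∀ u, HasDerivAt G' (G'' u) u) (x t : ℝ) :
    HasDerivAt
      (fun s => c * G (c ^ 2 * s ^ 2 - x ^ 2) + 2 * c ^ 3 * s ^ 2 * G' (c ^ 2 * s ^ 2 - x ^ 2))
      (6 * c ^ 3 * t * G' (c ^ 2 * t ^ 2 - x ^ 2) + 4 * c ^ 5 * t ^ 3 * G'' (c ^ 2 * t ^ 2 - x ^ 2))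
      t := by
  have hu : HasDerivAt (fun s : ℝ => c ^ 2 * s ^ 2 - x ^ 2) (c ^ 2 * (2 * t)) t := by
    simpa using ((hasDerivAt_pow 2 t).const_mul (c ^ 2)).sub_const (x ^ 2)
  refine ((((hG _).comp t hu).const_mul c).add
    (((hasDerivAt_pow 2 t).const_mul (2 * c ^ 3)).mul ((hG' _).comp t hu))).congr_deriv ?_
  simp only [Function.comp_apply]
  ring

lemma hasDerivAt_radial_space (hG : ∀ u, HasDerivAt G (G' u) u) (t y : ℝ) :
    HasDerivAt (fun y => c * t * G (c ^ 2 * t ^ 2 - y ^ 2))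
      (-(2 * c * t * y * G' (c ^ 2 * t ^ 2 - y ^ 2))) y := by
  have hu : HasDerivAt (fun y : ℝ => c ^ 2 * t ^ 2 - y ^ 2) (-(2 * y)) y := by
    simpa using (hasDerivAt_pow 2 y).const_sub (c ^ 2 * t ^ 2)
  refine (((hG _).comp y hu).const_mul (c * t)).congr_deriv ?_
  ring

lemma hasDerivAt_radial_space_deriv (hG' : ∀ u, HasDerivAt G' (G'' u) u) (t x : ℝ) :
    HasDerivAt (fun y => -(2 * c * t * y * G' (c ^ 2 * t ^ 2 - y ^ 2)))
      (c * t * (4 * x ^ 2 * G'' (c ^ 2 * t ^ 2 - x ^ 2) - 2 * G' (c ^ 2 * t ^ 2 - x ^ 2))) x := by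
  have hu : HasDerivAt (fun y : ℝ => c ^ 2 * t ^ 2 - y ^ 2) (-(2 * x)) x := by
    simpa using (hasDerivAt_pow 2 x).const_sub (c ^ 2 * t ^ 2)
  refine ((((hasDerivAt_id x).const_mul (2 * c * t)).mul ((hG' _).comp x hu)).neg).congr_deriv ?_
  simp only [Function.comp_apply, id]
  ring

lemma kleinGordon_radial (hG : ∀ u, HasDerivAt G (G' u) u) (hG' : ∀ u, HasDerivAt G' (G'' u) u)
    {β x t : ℝ} (hode : (c ^ 2 * t ^ 2 - x ^ 2) * G'' (c ^ 2 * t ^ 2 - x ^ 2)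
      + 2 * G' (c ^ 2 * t ^ 2 - x ^ 2) = β * G (c ^ 2 * t ^ 2 - x ^ 2)) :
    iteratedDeriv 2 (fun s => c * s * G (c ^ 2 * s ^ 2 - x ^ 2)) t
      - c ^ 2 * iteratedDeriv 2 (fun y => c * t * G (c ^ 2 * t ^ 2 - y ^ 2)) x
      = 4 * c ^ 2 * β * (c * t * G (c ^ 2 * t ^ 2 - x ^ 2)) := by
  rw [iteratedDeriv_two_eq_of_hasDerivAt (hasDerivAt_radial_time c hG x)
      (hasDerivAt_radial_time_deriv c hG hG' x t),
    iteratedDeriv_two_eq_of_hasDerivAt (hasDerivAt_radial_space c hG t)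
      (hasDerivAt_radial_space_deriv c hG' t x)]
  linear_combination 4 * c ^ 3 * t * hode

end RadialProfile

theorem telegraph_tanh_rate_law_general
    (lam c : ℝ) (hc : 0 < c)
    (p : ℝ → ℝ → ℝ)
    (hp : ∀ x, ∀ t : ℝ, p x t = (1 / (2 * c * Real.cosh (lam * t))) *
      deriv (fun τ => besselI0 ((lam/c) * Real.sqrt (c^2*τ^2 - x^2))) t) :
    ∀ x t : ℝ, 0 < t → |x| < c*t →
      iteratedDeriv 2 (fun s => p x s) t
        + 2 * lam * Real.tanh (lam * t) * deriv (fun s => p x s) t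
        = c^2 * iteratedDeriv 2 (fun y => p y t) x := by
  intro x t _ hxt
  have ha := (entireCoeffs_besselCoeff (lam / c / 2)).deriv
  set q : ℝ → ℝ → ℝ := fun y s =>
    c * s * powerSum (derivCoeff (besselCoeff (lam / c / 2))) (c ^ 2 * s ^ 2 - y ^ 2)
  have hpq : ∀ y s, 0 < c ^ 2 * s ^ 2 - y ^ 2 → p y s = q y s / cosh (lam * s) := by
    intro y s h
    rw [hp, (hasDerivAt_besselI0_mul_sqrt _ _ _ h).deriv]
    simp only [q]
    field_simp
  have hu : 0 < c ^ 2 * t ^ 2 - x ^ 2 := by nlinarith [abs_nonneg x, sq_abs x]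
  have hev_t : (fun s => p x s) =ᶠ[𝓝 t] fun s => q x s / cosh (lam * s) := by
    filter_upwards [(by fun_prop : Continuous fun s : ℝ => c ^ 2 * s ^ 2 - x ^ 2).continuousAt
      |>.eventually (lt_mem_nhds hu)] with s hs using hpq x s hs
  have hev_x : (fun y => p y t) =ᶠ[𝓝 x] fun y => q y t / cosh (lam * t) := by
    filter_upwards [(by fun_prop : Continuous fun y : ℝ => c ^ 2 * t ^ 2 - y ^ 2).continuousAt
      |>.eventually (lt_mem_nhds hu)] with y hy using hpq y t hy
  have hode :=
    ha.ode_of_coeff_rec (m := 1) (derivCoeff_besselCoeff_succ _) (c ^ 2 * t ^ 2 - x ^ 2)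
  rw [one_add_one_eq_two] at hode
  have hkg := kleinGordon_radial c ha.hasDerivAt ha.deriv.hasDerivAt hode
  rw [hev_t.iteratedDeriv_eq, hev_t.deriv_eq, hev_x.iteratedDeriv_eq, iteratedDeriv_div_const,
    telegraph_div_cosh lam (hasDerivAt_radial_time c ha.hasDerivAt x)
      (hasDerivAt_radial_time_deriv c ha.hasDerivAt ha.deriv.hasDerivAt x t).differentiableAt]
  have hβ : 4 * c ^ 2 * (lam / c / 2) ^ 2 = lam ^ 2 := by field_simp; ring
  rw [hβ] at hkg
  rw [← mul_div_assoc]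
  congr 1
  linear_combination hkg

theorem telegraph_tanh_rate_law
    (lam c : ℝ) (hlam : 0 < lam) (hc : 0 < c)
    (p : ℝ → ℝ → ℝ)
    (hp : ∀ x, ∀ t : ℝ, p x t = (1 / (2 * c * Real.cosh (lam * t))) *
      deriv (fun τ => besselI0 ((lam/c) * Real.sqrt (c^2*τ^2 - x^2))) t) :
    ∀ x t : ℝ, 0 < t → |x| < c*t →
      iteratedDeriv 2 (fun s => p x s) t
        + 2 * lam * Real.tanh (lam * t) * deriv (fun s => p x s) t
        = c^2 * iteratedDeriv 2 (fun y => p y t) x :=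
  telegraph_tanh_rate_law_general lam c hc p hp
end

section
/- Let λ > 0, c > 0 and t > 0. Then ∫_{−ct}^{ct} (1/(2c cosh(λt))) · ∂/∂t I₀( (λ/c)√(c²t² − x²) ) dx = 1 − 1/cosh(λt); equivalently, ∫_{−t}^{t} ∂/∂t I₀( λ√(t² − y²) ) dy = 2(cosh(λt) − 1). Hence the absolutely continuous component of the law of Y(t) has total mass 1 − sech(λt), the remaining mass 1/cosh(λt) being carried by the discrete component concentrated at x = ±ct. -/
/-!
Near `τ = t` the integrand is `I₀(b √(τ² - y²)) = ∑ₙ (b²/4)ⁿ (τ² - y²)ⁿ / (n!)²`, a power series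
in `τ² - y²` with infinite radius, so it may be differentiated termwise. The differentiated terms
are nonnegative on `[-t, t]`, hence may be integrated termwise, and the Wallis integrals
`∫₋ₜᵗ (t² - y²)ᵏ dy = 2 t^{2k+1} 4ᵏ (k!)² / (2k+1)!` turn the `(k+1)`-st term into
`2 (bt)^{2k+2} / (2k+2)!`, a term of `2 (cosh (bt) - 1)`. The integral over `[-ct, ct]` reduces
to this one by the substitution `x = c y`.
-/

open Real MeasureTheory

open scoped Nat
open intervalIntegral

noncomputable def besselI0Sq (s : ℝ) : ℝ := ∑' n : ℕ, s ^ n / (n ! : ℝ) ^ 2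

theorem besselI0_eq_besselI0Sq (z : ℝ) : besselI0 z = besselI0Sq (z ^ 2 / 4) := by
  unfold besselI0 besselI0Sq
  congr 1 with k
  rw [pow_mul, div_pow]
  norm_num

theorem summable_pow_div_factorial_sq (q : ℝ) :
    Summable fun n : ℕ => q ^ n / (n ! : ℝ) ^ 2 := by
  refine .of_norm_bounded (Real.summable_pow_div_factorial |q|) fun n => ?_
  have h1 : (1 : ℝ) ≤ n ! := by exact_mod_cast n.factorial_pos
  simp only [norm_div, norm_pow, Real.norm_eq_abs, Nat.abs_cast]
  rw [sq]
  gcongr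
  exact le_mul_of_one_le_left (by positivity) h1

theorem summable_mul_pow_div_factorial_sq (q : ℝ) :
    Summable fun n : ℕ => n * q ^ n / (n ! : ℝ) ^ 2 := by
  refine .of_norm_bounded (Real.summable_pow_div_factorial |q|) fun n => ?_
  have h1 : (n : ℝ) ≤ n ! := by exact_mod_cast n.self_le_factorial
  simp only [norm_div, norm_mul, norm_pow, Real.norm_eq_abs, Nat.abs_cast]
  rw [sq, div_le_div_iff₀ (by positivity) (by positivity)]
  calc (n : ℝ) * |q| ^ n * n ! ≤ n ! * |q| ^ n * n ! := by gcongr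
    _ = |q| ^ n * (n ! * n !) := by ring

theorem hasDerivAt_besselI0Sq (s : ℝ) :
    HasDerivAt besselI0Sq (∑' n : ℕ, n * s ^ (n - 1) / (n ! : ℝ) ^ 2) s := by
  set R := |s| + 1
  have hR : 1 ≤ R := by simp [R]
  have hs : s ∈ Set.Ioo (-R) R := abs_lt.mp (lt_add_one _)
  refine hasDerivAt_tsum_of_isPreconnected (summable_mul_pow_div_factorial_sq R) isOpen_Ioo
    isPreconnected_Ioo (fun n y _ => (hasDerivAt_pow n y).div_const _) (fun n y hy => ?_) hs
    (summable_pow_div_factorial_sq s) hs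
  have hy : |y| ≤ R := (abs_lt.mpr hy).le
  simp only [norm_div, norm_mul, norm_pow, Real.norm_eq_abs, Nat.abs_cast]
  gcongr
  exact (pow_le_pow_left₀ (abs_nonneg y) hy _).trans (pow_le_pow_right₀ hR (n.sub_le 1))

theorem hasDerivAt_besselI0_mul_sqrt_sq_sub_sq (b y t : ℝ) (h : y ^ 2 < t ^ 2) :
    HasDerivAt (fun τ => besselI0 (b * √(τ ^ 2 - y ^ 2)))
      ((∑' n : ℕ, n * (b ^ 2 / 4 * (t ^ 2 - y ^ 2)) ^ (n - 1) / (n ! : ℝ) ^ 2)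
        * (b ^ 2 / 4 * (2 * t))) t := by
  have hinner :
      HasDerivAt (fun τ : ℝ => b ^ 2 / 4 * (τ ^ 2 - y ^ 2)) (b ^ 2 / 4 * (2 * t)) t := by
    simpa using ((hasDerivAt_pow 2 t).sub_const (y ^ 2)).const_mul (b ^ 2 / 4)
  refine ((hasDerivAt_besselI0Sq _).comp t hinner).congr_of_eventuallyEq ?_
  filter_upwards [((continuous_pow 2).tendsto t).eventually_const_lt h] with τ hτ
  rw [Function.comp_apply, besselI0_eq_besselI0Sq, mul_pow, sq_sqrt (by linarith)]
  congr 1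
  ring

theorem prod_range_two_mul_add_two_div (k : ℕ) :
    ∏ i ∈ Finset.range k, (2 * (i : ℝ) + 2) / (2 * i + 3)
      = 4 ^ k * (k ! : ℝ) ^ 2 / (2 * k + 1)! := by
  induction k with
  | zero => norm_num
  | succ k ih =>
    rw [Finset.prod_range_succ, ih, show 2 * (k + 1) + 1 = (2 * k + 1) + 1 + 1 by ring,
      Nat.factorial_succ (2 * k + 1 + 1), Nat.factorial_succ (2 * k + 1), Nat.factorial_succ k]
    push_cast
    field_simp
    ring

theorem integral_one_sub_sq_pow (k : ℕ) :
    ∫ u in (-1 : ℝ)..1, (1 - u ^ 2) ^ k = 2 * (4 ^ k * (k ! : ℝ) ^ 2 / (2 * k + 1)!) := by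
  have h := integral_sin_pow_odd_mul_cos_pow (a := 0) (b := π) k 0
  simp only [pow_zero, mul_one, one_mul, cos_pi, cos_zero] at h
  rw [← h, integral_sin_pow_odd, prod_range_two_mul_add_two_div]

theorem integral_sq_sub_sq_pow (a : ℝ) (k : ℕ) :
    ∫ x in (-a)..a, (a ^ 2 - x ^ 2) ^ k
      = 2 * a ^ (2 * k + 1) * (4 ^ k * (k ! : ℝ) ^ 2 / (2 * k + 1)!) := by
  have h := smul_integral_comp_mul_left (fun x => (a ^ 2 - x ^ 2) ^ k) a (a := -1) (b := 1)
  simp only [mul_neg, mul_one, smul_eq_mul] at h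
  have hscale : ∀ u : ℝ, (a ^ 2 - (a * u) ^ 2) ^ k = a ^ (2 * k) * (1 - u ^ 2) ^ k :=
    fun u => by rw [pow_mul, ← mul_pow]; ring
  simp only [hscale, intervalIntegral.integral_const_mul, integral_one_sub_sq_pow] at h
  rw [← h]
  ring

theorem intervalIntegral_tsum_of_nonneg {F : ℕ → ℝ → ℝ} {a b : ℝ} (hab : a ≤ b)
    (hF : ∀ n, Continuous (F n)) (hF_nonneg : ∀ n, ∀ x ∈ Set.Icc a b, 0 ≤ F n x)
    (hsum : Summable fun n => ∫ x in a..b, F n x) :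
    ∫ x in a..b, ∑' n, F n x = ∑' n, ∫ x in a..b, F n x := by
  simp only [integral_of_le hab] at hsum ⊢
  refine (integral_tsum_of_summable_integral_norm (fun n => (hF n).integrableOn_Ioc) ?_).symm
  refine hsum.congr fun n => setIntegral_congr_fun measurableSet_Ioc fun x hx => ?_
  exact (Real.norm_of_nonneg (hF_nonneg n x (Set.Ioc_subset_Icc_self hx))).symm

theorem integral_deriv_term_besselI0 (b t : ℝ) (k : ℕ) :
    ∫ y in (-t)..t,
        ((k + 1 : ℕ) : ℝ) * (b ^ 2 / 4 * (t ^ 2 - y ^ 2)) ^ k / ((k + 1)! : ℝ) ^ 2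
          * (b ^ 2 / 4 * (2 * t))
      = 2 * ((b * t) ^ (2 * (k + 1)) / (2 * (k + 1))!) := by
  have hfactor : ∀ y : ℝ,
      ((k + 1 : ℕ) : ℝ) * (b ^ 2 / 4 * (t ^ 2 - y ^ 2)) ^ k / ((k + 1)! : ℝ) ^ 2
          * (b ^ 2 / 4 * (2 * t))
        = (k + 1) * (b ^ 2) ^ k / (4 ^ k * ((k + 1)! : ℝ) ^ 2) * (b ^ 2 / 4 * (2 * t))
          * (t ^ 2 - y ^ 2) ^ k := fun y => by
    rw [mul_pow, div_pow]; push_cast; ring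
  simp only [hfactor, intervalIntegral.integral_const_mul, integral_sq_sub_sq_pow]
  rw [show 2 * (k + 1) = (2 * k + 1) + 1 by ring, Nat.factorial_succ (2 * k + 1),
    Nat.factorial_succ k]
  push_cast
  field_simp
  ring

theorem integral_deriv_besselI0_mul_sqrt_sq_sub_sq (b : ℝ) {t : ℝ} (ht : 0 < t) :
    ∫ y in (-t)..t, deriv (fun τ => besselI0 (b * √(τ ^ 2 - y ^ 2))) t
      = 2 * (cosh (b * t) - 1) := by
  -- `F n y` is the `τ`-derivative at `t` of the `n`-th term of the series of the integrand.
  set F : ℕ → ℝ → ℝ := fun n y =>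
    n * (b ^ 2 / 4 * (t ^ 2 - y ^ 2)) ^ (n - 1) / (n ! : ℝ) ^ 2 * (b ^ 2 / 4 * (2 * t))
  have hF : ∀ y, y ^ 2 < t ^ 2 →
      deriv (fun τ => besselI0 (b * √(τ ^ 2 - y ^ 2))) t = ∑' n, F n y := fun y hy => by
    rw [(hasDerivAt_besselI0_mul_sqrt_sq_sub_sq b y t hy).deriv, ← tsum_mul_right]
  have hsum : HasSum (fun n => ∫ y in (-t)..t, F n y) (2 * (cosh (b * t) - 1)) := by
    rw [← hasSum_nat_add_iff' 1]
    simp only [F, Nat.add_sub_cancel, integral_deriv_term_besselI0]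
    simpa using ((hasSum_nat_add_iff' 1).mpr (Real.hasSum_cosh (b * t))).mul_left 2
  have hF_nonneg : ∀ n, ∀ y ∈ Set.Icc (-t) t, 0 ≤ F n y := fun n y hy => by
    have : 0 ≤ t ^ 2 - y ^ 2 := sub_nonneg.mpr (sq_le_sq' hy.1 hy.2)
    positivity
  calc ∫ y in (-t)..t, deriv (fun τ => besselI0 (b * √(τ ^ 2 - y ^ 2))) t
      = ∫ y in (-t)..t, ∑' n, F n y := by
        refine integral_congr_ae ?_
        filter_upwards [(Set.countable_singleton t).ae_notMem volume] with y hyt hy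
        rw [Set.uIoc_of_le (by linarith)] at hy
        exact hF y (sq_lt_sq' hy.1 (lt_of_le_of_ne hy.2 hyt))
    _ = ∑' n, ∫ y in (-t)..t, F n y :=
        intervalIntegral_tsum_of_nonneg (by linarith) (fun n => by fun_prop) hF_nonneg
          hsum.summable
    _ = 2 * (cosh (b * t) - 1) := hsum.tsum_eq

theorem integral_deriv_besselI0_mul_sqrt_mul_sq_sub_sq (b : ℝ) {c t : ℝ} (hc : 0 < c)
    (ht : 0 < t) :
    ∫ x in (-(c * t))..(c * t), deriv (fun τ => besselI0 (b * √(c ^ 2 * τ ^ 2 - x ^ 2))) t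
      = 2 * c * (cosh (b * c * t) - 1) := by
  have hscale : ∀ y τ : ℝ,
      b * √(c ^ 2 * τ ^ 2 - (c * y) ^ 2) = b * c * √(τ ^ 2 - y ^ 2) := fun y τ => by
      rw [show c ^ 2 * τ ^ 2 - (c * y) ^ 2 = c ^ 2 * (τ ^ 2 - y ^ 2) by ring,
        sqrt_mul (sq_nonneg c), sqrt_sq hc.le, mul_assoc]
  have h := smul_integral_comp_mul_left
    (fun x => deriv (fun τ => besselI0 (b * √(c ^ 2 * τ ^ 2 - x ^ 2))) t) c (a := -t) (b := t)
  simp only [mul_neg, smul_eq_mul, hscale] at h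
  rw [← h, integral_deriv_besselI0_mul_sqrt_sq_sub_sq (b * c) ht, mul_assoc b]
  ring

theorem telegraph_tanh_rate_ac_mass_general
    (lam c t : ℝ) (hc : 0 < c) (ht : 0 < t) :
    (∫ x in (-(c*t))..(c*t),
        (1 / (2 * c * Real.cosh (lam * t))) *
          deriv (fun τ => besselI0 ((lam/c) * Real.sqrt (c^2*τ^2 - x^2))) t
        = 1 - 1 / Real.cosh (lam * t)) ∧
    (∫ y in (-t)..t, deriv (fun τ => besselI0 (lam * Real.sqrt (τ^2 - y^2))) t
        = 2 * (Real.cosh (lam * t) - 1)) := by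
  refine ⟨?_, integral_deriv_besselI0_mul_sqrt_sq_sub_sq lam ht⟩
  rw [intervalIntegral.integral_const_mul,
    integral_deriv_besselI0_mul_sqrt_mul_sq_sub_sq (lam / c) hc ht, div_mul_cancel₀ lam hc.ne']
  field_simp [(cosh_pos (lam * t)).ne']

theorem telegraph_tanh_rate_ac_mass
    (lam c t : ℝ) (hlam : 0 < lam) (hc : 0 < c) (ht : 0 < t) :
    (∫ x in (-(c*t))..(c*t),
        (1 / (2 * c * Real.cosh (lam * t))) *
          deriv (fun τ => besselI0 ((lam/c) * Real.sqrt (c^2*τ^2 - x^2))) t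
        = 1 - 1 / Real.cosh (lam * t)) ∧
    (∫ y in (-t)..t, deriv (fun τ => besselI0 (lam * Real.sqrt (τ^2 - y^2))) t
        = 2 * (Real.cosh (lam * t) - 1)) :=
  telegraph_tanh_rate_ac_mass_general lam c t hc ht
end

section
/- Let α > 0, t > 0, let c : ℝ → (0,∞) be continuous with Φ_c(x) = ∫₀^x dw/c(w) a surjection of ℝ onto ℝ. Then the function p(x) = (1/(B(α,1/2) · c(x) · t)) · (1 − Φ_c(x)²/t²)^{α−1} is nonnegative on the set D = {x ∈ ℝ : |Φ_c(x)| < t} and satisfies ∫_D p(x) dx = 1; that is, p is a probability density on D. -/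
open Real MeasureTheory

/-- The Euler Beta function, `B(a,b) = Γ(a)Γ(b)/Γ(a+b)`. -/
noncomputable def betaFn (a b : ℝ) : ℝ := Real.Gamma a * Real.Gamma b / Real.Gamma (a + b)

/-- `Φ_c x = ∫₀ˣ dw / c(w)`. -/
noncomputable def Phi (c : ℝ → ℝ) (x : ℝ) : ℝ := ∫ w in (0:ℝ)..x, (c w)⁻¹

/-!
Since `Φ_c' = 1/c > 0` and `Φ_c` is onto, `Φ_c` is a differentiable bijection of `ℝ`, and the
substitution `y = Φ_c x` turns `∫_D p` into `(B t)⁻¹ ∫_{-t}^{t} (1 - y²/t²)^(α-1) dy`. The affine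
substitution `y = t (2u - 1)` makes this `2 · 4^(α-1) · B(α, α) / B(α, 1/2)`, which is `1` by
Legendre's duplication formula.
-/

lemma betaFn_pos {a b : ℝ} (ha : 0 < a) (hb : 0 < b) : 0 < betaFn a b :=
  ProbabilityTheory.beta_pos ha hb

lemma integral_rpow_mul_one_sub_rpow {a b : ℝ} (ha : 0 < a) (hb : 0 < b) :
    ∫ x in (0:ℝ)..1, x ^ (a - 1) * (1 - x) ^ (b - 1) = betaFn a b := by
  have hcomplex : Complex.betaIntegral a b
      = ((∫ x in (0:ℝ)..1, x ^ (a - 1) * (1 - x) ^ (b - 1) : ℝ) : ℂ) := by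
    rw [Complex.betaIntegral, ← intervalIntegral.integral_ofReal]
    refine intervalIntegral.integral_congr fun x hx => ?_
    rw [Set.uIcc_of_le zero_le_one] at hx
    rw [Complex.ofReal_mul, Complex.ofReal_cpow hx.1, Complex.ofReal_cpow (by linarith [hx.2])]
    push_cast
    ring
  rw [betaFn, ← ProbabilityTheory.beta, ProbabilityTheory.beta_eq_betaIntegralReal a b ha hb,
    hcomplex, Complex.ofReal_re]


/-- Legendre's duplication formula. -/
lemma betaFn_half_eq {a : ℝ} (ha : 0 < a) :
    betaFn a (1/2) = 2 * 4 ^ (a - 1) * betaFn a a := by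
  have hfour : (4:ℝ) ^ (a - 1) = 2 ^ (2 * (a - 1)) := by
    rw [Real.rpow_mul zero_le_two]; norm_num
  have hpow : (2:ℝ) ^ (2 * (a - 1)) * 2 ^ (1 - 2 * a) = 2⁻¹ := by
    rw [← Real.rpow_add two_pos, show 2 * (a - 1) + (1 - 2 * a) = -1 by ring, Real.rpow_neg_one]
  have hΓ2a : Real.Gamma (2 * a) ≠ 0 := (Real.Gamma_pos_of_pos (by linarith)).ne'
  have hΓhalf : Real.Gamma (a + 1/2) ≠ 0 := (Real.Gamma_pos_of_pos (by linarith)).ne'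
  unfold betaFn
  rw [Real.Gamma_one_half_eq, show a + a = 2 * a by ring, hfour, ← mul_div_assoc,
    div_eq_div_iff hΓhalf hΓ2a]
  linear_combination (-2 * 2 ^ (2 * (a - 1)) * Real.Gamma a) * Real.Gamma_mul_Gamma_add_half a
    - (2 * Real.Gamma a * Real.Gamma (2 * a) * √π) * hpow

lemma integral_one_sub_sq_rpow {a : ℝ} (ha : 0 < a) :
    ∫ s in (-1:ℝ)..1, (1 - s ^ 2) ^ (a - 1) = betaFn a (1/2) := by
  have haffine := intervalIntegral.smul_integral_comp_mul_sub
    (fun s : ℝ => (1 - s ^ 2) ^ (a - 1)) (a := 0) (b := 1) 2 1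
  norm_num at haffine
  rw [← haffine, betaFn_half_eq ha, ← integral_rpow_mul_one_sub_rpow ha ha,
    ← intervalIntegral.integral_const_mul, ← intervalIntegral.integral_const_mul]
  refine intervalIntegral.integral_congr fun u hu => ?_
  rw [Set.uIcc_of_le zero_le_one] at hu
  have hsq : 1 - (2 * u - 1) ^ 2 = 4 * (u * (1 - u)) := by ring
  rw [hsq, Real.mul_rpow zero_le_four (mul_nonneg hu.1 (by linarith [hu.2])),
    Real.mul_rpow hu.1 (by linarith [hu.2])]
  ring

lemma integral_one_sub_sq_div_sq_rpow {a : ℝ} (ha : 0 < a) (t : ℝ) :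
    ∫ y in (-t)..t, (1 - y ^ 2 / t ^ 2) ^ (a - 1) = t * betaFn a (1/2) := by
  rcases eq_or_ne t 0 with rfl | ht
  · simp
  have hscale := intervalIntegral.integral_comp_div
    (fun s : ℝ => (1 - s ^ 2) ^ (a - 1)) (a := -t) (b := t) ht
  simp only [div_pow, neg_div, div_self ht] at hscale
  rw [hscale, integral_one_sub_sq_rpow ha, smul_eq_mul]

theorem integral_preimage_eq_integral_abs_deriv_smul {E : Type*} [NormedAddCommGroup E]
    [NormedSpace ℝ E] {f f' : ℝ → ℝ} (hf' : ∀ x, HasDerivAt f (f' x) x)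
    (hf : Function.Bijective f) {s : Set ℝ} (hs : MeasurableSet s) (g : ℝ → E) :
    ∫ x in f ⁻¹' s, |f' x| • g (f x) = ∫ y in s, g y := by
  have hfcont : Continuous f := continuous_iff_continuousAt.2 fun x => (hf' x).continuousAt
  conv_rhs => rw [← Set.image_preimage_eq s hf.surjective]
  exact (integral_image_eq_integral_abs_deriv_smul (hs.preimage hfcont.measurable)
    (fun x _ => (hf' x).hasDerivWithinAt) hf.injective.injOn g).symm

lemma hasDerivAt_Phi {c : ℝ → ℝ} (hc : Continuous c) (hc0 : ∀ x, c x ≠ 0) (x : ℝ) :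
    HasDerivAt (Phi c) (c x)⁻¹ x :=
  ((hc.inv₀ hc0).integral_hasStrictDerivAt 0 x).hasDerivAt

lemma strictMono_Phi {c : ℝ → ℝ} (hc : Continuous c) (hcpos : ∀ x, 0 < c x) :
    StrictMono (Phi c) :=
  strictMono_of_hasDerivAt_pos (hasDerivAt_Phi hc fun x => (hcpos x).ne')
    fun x => inv_pos.2 (hcpos x)

theorem EPD_space_varying_velocity_density
    (α t : ℝ) (hα : 0 < α) (ht : 0 < t)
    (c : ℝ → ℝ) (hc : Continuous c) (hcpos : ∀ x, 0 < c x)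
    (hsurj : Function.Surjective (Phi c))
    (p : ℝ → ℝ)
    (hp : ∀ x : ℝ,
      p x = (1 / (betaFn α (1/2) * c x * t)) * (1 - (Phi c x)^2 / t^2) ^ (α - 1)) :
    (∀ x ∈ {x : ℝ | |Phi c x| < t}, 0 ≤ p x) ∧
    ∫ x in {x : ℝ | |Phi c x| < t}, p x = 1 := by
  have hB := betaFn_pos hα one_half_pos
  refine ⟨fun x hx => ?_, ?_⟩
  · have hbase : 0 ≤ 1 - Phi c x ^ 2 / t ^ 2 := by
      rw [sub_nonneg, div_le_one (by positivity)]
      exact sq_le_sq' (abs_lt.1 hx).1.le (abs_lt.1 hx).2.le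
    have := hcpos x
    rw [hp x]
    positivity
  have hD : {x : ℝ | |Phi c x| < t} = Phi c ⁻¹' Set.Ioo (-t) t := by
    ext x; simp [abs_lt]
  have hp' : p = fun x => |(c x)⁻¹| •
      ((betaFn α (1/2) * t)⁻¹ * (1 - Phi c x ^ 2 / t ^ 2) ^ (α - 1)) := by
    ext x
    rw [hp x, abs_of_pos (inv_pos.2 (hcpos x)), smul_eq_mul]
    field_simp
  rw [hD, hp', integral_preimage_eq_integral_abs_deriv_smul
      (hasDerivAt_Phi hc fun x => (hcpos x).ne') ⟨(strictMono_Phi hc hcpos).injective, hsurj⟩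
      measurableSet_Ioo (fun y => (betaFn α (1/2) * t)⁻¹ * (1 - y ^ 2 / t ^ 2) ^ (α - 1)),
    integral_const_mul, ← integral_Ioc_eq_integral_Ioo,
    ← intervalIntegral.integral_of_le (by linarith), integral_one_sub_sq_div_sq_rpow hα]
  field_simp
end
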